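/- arXiv:2111.10335 — 7 statements merged into one kernel-verified Lean document; each statement's English description precedes it below -/
import Mathlib

section
/- For x ∈ [0,1], the inequality x_DM(x) ≥ a is equivalent to x ≥ a_L, where a_L := a(1-μ)μ_L / ((μ_L - μ)a + μ(1-μ_L)). Moreover a_L ≥ a, with strict inequality if μ_L > μ and a < 1. -/
open Set

theorem stmt1 (μ μL a : ℝ) (hμ : μ ∈ Ioo (0:ℝ) 1) (hμL : μL ∈ Ioo (0:ℝ) 1)
    (ha : a ∈ Ioo (0:ℝ) 1) (hle : μ ≤ μL) (hμa : μ < a) :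
    (∀ x ∈ Icc (0:ℝ) 1,
      μ * (1 - μL) * x / (μL * (1 - μ) - x * (μL - μ)) ≥ a ↔
        x ≥ a * (1 - μ) * μL / ((μL - μ) * a + μ * (1 - μL))) ∧
    a * (1 - μ) * μL / ((μL - μ) * a + μ * (1 - μL)) ≥ a ∧
    (μ < μL → a < 1 →
      a * (1 - μ) * μL / ((μL - μ) * a + μ * (1 - μL)) > a) := by
  obtain ⟨hμ0, hμ1⟩ := hμ
  obtain ⟨hμL0, hμL1⟩ := hμL
  obtain ⟨ha0, ha1⟩ := ha
  have hD : 0 < (μL - μ) * a + μ * (1 - μL) := by nlinarith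
  refine ⟨?_, ?_, ?_⟩
  · rintro x ⟨hx0, hx1⟩
    have hden : 0 < μL * (1 - μ) - x * (μL - μ) := by nlinarith
    rw [ge_iff_le, le_div_iff₀ hden, ge_iff_le, div_le_iff₀ hD]
    constructor <;> intro h <;> nlinarith
  · rw [ge_iff_le, le_div_iff₀ hD]
    nlinarith [mul_nonneg (mul_nonneg ha0.le (sub_nonneg.mpr hle)) (by linarith : (0:ℝ) ≤ 1 - a)]
  · intro h1 h2
    rw [gt_iff_lt, lt_div_iff₀ hD]
    nlinarith [mul_pos (mul_pos ha0 (by linarith : (0:ℝ) < μL - μ)) (by linarith : (0:ℝ) < 1 - a)]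
end

section
/- Fix μ, a, d with 0 < μ < a < 1, a - μ < d < a. Define f(μ_L) := ((d-2a+1)μ - ad + a)μ_L + (a-1)(d+1)μ. Then f is strictly increasing in μ_L, f(1) = a(1-μ)(1-d) > 0, and f(μ) = -μ(1-μ)(1+d-2a). Hence if 2a < 1+d then f(μ) < 0 and there exists a unique μ_L* ∈ (μ,1) with f(μ_L*) = 0, while if 2a ≥ 1+d then f(μ_L) > 0 for all μ_L > μ. -/
open Set

theorem stmt6 (μ a d : ℝ) (hμ : 0 < μ) (hμa : μ < a) (ha1 : a < 1)
    (hd1 : a - μ < d) (hd2 : d < a)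
    (f : ℝ → ℝ)
    (hf : f = fun μL => ((d - 2 * a + 1) * μ - a * d + a) * μL + (a - 1) * (d + 1) * μ) :
    StrictMono f ∧
    f 1 = a * (1 - μ) * (1 - d) ∧ f 1 > 0 ∧
    f μ = -(μ * (1 - μ) * (1 + d - 2 * a)) ∧
    (2 * a < 1 + d → f μ < 0 ∧ ∃! μL, μL ∈ Ioo μ (1:ℝ) ∧ f μL = 0) ∧
    (2 * a ≥ 1 + d → ∀ μL > μ, f μL > 0) := by
  have ha0 : 0 < a := lt_trans hμ hμa
  have hs : 0 < (d - 2 * a + 1) * μ - a * d + a := by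
    rcases le_or_gt (1 + d - 2 * a) 0 with h | h
    · nlinarith [mul_nonpos_of_nonneg_of_nonpos (le_of_lt (sub_pos.mpr hμa)) h]
    · nlinarith [mul_pos hμ h, mul_pos ha0 (sub_pos.mpr hd2)]
  have hmono : StrictMono f := by
    intro x y hxy
    simp only [hf]
    have := mul_lt_mul_of_pos_left hxy hs
    nlinarith
  have hf1 : f 1 = a * (1 - μ) * (1 - d) := by simp [hf]; ring
  have hf1pos : f 1 > 0 := by
    rw [hf1]
    exact mul_pos (mul_pos ha0 (by linarith)) (by linarith)
  have hfμ : f μ = -(μ * (1 - μ) * (1 + d - 2 * a)) := by simp [hf]; ring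
  refine ⟨hmono, hf1, hf1pos, hfμ, ?_, ?_⟩
  · intro h
    have hfμneg : f μ < 0 := by
      rw [hfμ]
      have := mul_pos (mul_pos hμ (show (0:ℝ) < 1 - μ by linarith)) (show (0:ℝ) < 1 + d - 2*a by linarith)
      linarith
    refine ⟨hfμneg, ?_⟩
    set s := (d - 2 * a + 1) * μ - a * d + a with hsdef
    have hroot : f ((1 - a) * (d + 1) * μ / s) = 0 := by
      simp only [hf]
      field_simp
      ring
    refine ⟨(1 - a) * (d + 1) * μ / s, ⟨⟨?_, ?_⟩, hroot⟩, ?_⟩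
    · have : f μ < f ((1 - a) * (d + 1) * μ / s) := by rw [hroot]; exact hfμneg
      exact hmono.lt_iff_lt.mp this
    · have : f ((1 - a) * (d + 1) * μ / s) < f 1 := by rw [hroot]; exact hf1pos
      exact hmono.lt_iff_lt.mp this
    · intro y ⟨_, hy⟩
      exact hmono.injective (hy.trans hroot.symm)
  · intro h μL hμL
    have : f μ ≥ 0 := by
      rw [hfμ]
      nlinarith [mul_pos hμ (show (0:ℝ) < 1 - μ by linarith)]
    have := hmono hμL
    linarith
end

section
/- Let 0 < μ < a < 1 and a - μ < d < a. Define λ(μ_L) := ((1-a_L(μ_L))/(1-μ_L)) · (μ_L + d - a_L(μ_L))/d where a_L(μ_L) = a(1-μ)μ_L/((μ_L-μ)a + μ(1-μ_L)). Then λ(μ) = ((1-a)/(1-μ))·(μ - a + d)/d and λ(1⁻) (the limit as μ_L → 1) equals (μ/a)·((1-a)/(1-μ)), and λ(μ) < lim_{μ_L→1} λ(μ_L) if and only if (a-μ)(a-d) > 0, which holds under the stated assumptions. -/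
open Set Filter Topology

theorem stmt7 (μ a d : ℝ) (hμ : 0 < μ) (hμa : μ < a) (ha1 : a < 1)
    (hd1 : a - μ < d) (hd2 : d < a)
    (aL lam : ℝ → ℝ)
    (haL : aL = fun μL => a * (1 - μ) * μL / ((μL - μ) * a + μ * (1 - μL)))
    (hlam : lam = fun μL => ((1 - aL μL) / (1 - μL)) * ((μL + d - aL μL) / d)) :
    lam μ = ((1 - a) / (1 - μ)) * ((μ - a + d) / d) ∧
    Tendsto lam (nhdsWithin 1 (Iio 1)) (nhds ((μ / a) * ((1 - a) / (1 - μ)))) ∧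
    (lam μ < (μ / a) * ((1 - a) / (1 - μ)) ↔ (a - μ) * (a - d) > 0) ∧
    (a - μ) * (a - d) > 0 := by
  have hμ1 : μ < 1 := hμa.trans ha1
  have hd0 : 0 < d := lt_trans (by linarith) hd1
  have h1μ : 0 < 1 - μ := by linarith
  have h1a : 0 < 1 - a := by linarith
  have ha0 : 0 < a := hμ.trans hμa
  -- Part 1
  have haLμ : aL μ = a := by
    rw [haL]
    simp only
    rw [show (μ - μ) * a + μ * (1 - μ) = μ * (1 - μ) by ring]
    field_simp
  have part1 : lam μ = ((1 - a) / (1 - μ)) * ((μ - a + d) / d) := by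
    rw [hlam]; simp only [haLμ]; ring_nf
  -- Part 2
  set D : ℝ → ℝ := fun x => (x - μ) * a + μ * (1 - x) with hD
  have hDcont : Continuous D := by fun_prop
  have hD1 : D 1 = (1 - μ) * a := by simp only [hD]; ring
  have hD1ne : D 1 ≠ 0 := by rw [hD1]; positivity
  set g : ℝ → ℝ := fun x => (μ * (1 - a) / D x) * ((x + d - aL x) / d) with hg
  have hev : ∀ᶠ x in 𝓝[<] (1:ℝ), lam x = g x := by
    have h1 : ∀ᶠ x in 𝓝[<] (1:ℝ), D x ≠ 0 :=
      eventually_nhdsWithin_of_eventually_nhds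
        (hDcont.continuousAt.eventually_ne hD1ne)
    filter_upwards [h1, self_mem_nhdsWithin] with x hx hx1
    have hx1' : (1:ℝ) - x ≠ 0 := by
      have : x < 1 := hx1
      intro h; linarith [sub_eq_zero.mp h]
    have haLx : aL x = a * (1 - μ) * x / D x := by rw [haL]
    rw [hlam, hg]
    simp only
    rw [haLx]
    have key : (1 - a * (1 - μ) * x / D x) / (1 - x) = μ * (1 - a) / D x := by
      rw [div_eq_div_iff (sub_ne_zero.mpr (ne_of_lt (show x < 1 from hx1)).symm) hx]
      field_simp
      simp only [hD]
      ring
    rw [key]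
  have hgcont : Tendsto g (𝓝 1) (𝓝 (g 1)) := by
    apply ContinuousAt.tendsto
    have haLc : ContinuousAt aL 1 := by
      rw [haL]
      exact ContinuousAt.div (by fun_prop) hDcont.continuousAt hD1ne
    apply ContinuousAt.mul
    · exact ContinuousAt.div continuousAt_const hDcont.continuousAt hD1ne
    · exact ContinuousAt.div (by fun_prop) continuousAt_const (ne_of_gt hd0)
  have hg1 : g 1 = (μ / a) * ((1 - a) / (1 - μ)) := by
    have haL1 : aL 1 = 1 := by
      rw [haL]; simp only
      rw [show ((1:ℝ) - μ) * a + μ * (1 - 1) = a * (1 - μ) by ring]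
      field_simp
    rw [hg]; simp only [haL1, hD1]
    rw [show (1:ℝ) + d - 1 = d by ring]
    rw [div_self (ne_of_gt hd0)]
    field_simp
  have part2 : Tendsto lam (𝓝[<] 1) (𝓝 ((μ / a) * ((1 - a) / (1 - μ)))) := by
    refine Tendsto.congr' (Filter.EventuallyEq.symm hev) ?_
    rw [← hg1]
    exact hgcont.mono_left nhdsWithin_le_nhds
  -- Part 3
  have part3 : lam μ < (μ / a) * ((1 - a) / (1 - μ)) ↔ (a - μ) * (a - d) > 0 := by
    rw [part1]
    rw [div_mul_div_comm, div_mul_div_comm,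
        div_lt_div_iff₀ (by positivity) (by positivity)]
    constructor
    · intro h; nlinarith [mul_pos h1a h1μ]
    · intro h; nlinarith [mul_pos (mul_pos h1a h1μ) h]
  have part4 : (a - μ) * (a - d) > 0 :=
    mul_pos (by linarith) (by linarith)
  exact ⟨part1, part2, part3, part4⟩
end

section
/- Let 0 < μ < a < 1 and d > a - μ. Define h(d) := 4a² - 3aμ - 2a + μ + (μ - 2a)d. Then h is strictly decreasing in d, and h(d) > 0 if and only if d < d̄ := (4a² - 3aμ - 2a + μ)/(2a - μ). Moreover, there exists d ∈ (a - μ, d̄) (i.e., a - μ < d̄) if and only if a > ā := (1 + √(1 - 2μ + 2μ²))/2. -/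
open Set

theorem stmt11 (μ a : ℝ) (hμ : 0 < μ) (hμa : μ < a) (ha1 : a < 1) :
    StrictAnti (fun d => 4 * a ^ 2 - 3 * a * μ - 2 * a + μ + (μ - 2 * a) * d) ∧
    (∀ d : ℝ, 4 * a ^ 2 - 3 * a * μ - 2 * a + μ + (μ - 2 * a) * d > 0 ↔
      d < (4 * a ^ 2 - 3 * a * μ - 2 * a + μ) / (2 * a - μ)) ∧
    (a - μ < (4 * a ^ 2 - 3 * a * μ - 2 * a + μ) / (2 * a - μ) ↔
      a > (1 + Real.sqrt (1 - 2 * μ + 2 * μ ^ 2)) / 2) := by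
  have hpos : 0 < 2 * a - μ := by linarith
  have hs : Real.sqrt (1 - 2 * μ + 2 * μ ^ 2) ^ 2 = 1 - 2 * μ + 2 * μ ^ 2 := by
    rw [Real.sq_sqrt]; nlinarith
  have hsnn : 0 ≤ Real.sqrt (1 - 2 * μ + 2 * μ ^ 2) := Real.sqrt_nonneg _
  refine ⟨?_, ?_, ?_⟩
  · intro x y hxy
    simp only
    nlinarith
  · intro d
    rw [lt_div_iff₀ hpos]
    constructor <;> intro h <;> nlinarith
  · rw [lt_div_iff₀ hpos]
    set s := Real.sqrt (1 - 2 * μ + 2 * μ ^ 2) with hsdef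
    have hlow : (1 - s) / 2 < a := by nlinarith
    constructor <;> intro h
    · by_contra hc
      push_neg at hc
      nlinarith
    · nlinarith
end

section
/- Let 0 < μ < a < 1, d > 0, and μ_B ∈ (μ, a). The partial derivative with respect to d of f(μ_B, d) := μ_B((μ-a)μ_B + (a-1)μ)²((μ² + (d-1)μ + (a-1)d)μ_B - aμ² + (a - ad)μ) - μ((μ + a - 1)μ_B - aμ)²((μ-a)μ_B² + (d-1)(μ-a)μ_B + (a-1)dμ) equals (μ_B - μ)((μ-a)μ_B + (a-1)μ)((μ-a)μ_B - aμ)((μ+a-1)μ_B - aμ), and this product is strictly negative for μ_B ∈ (μ, a). -/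
open Set

theorem stmt12 (μ a d μB : ℝ) (hμ : 0 < μ) (hμa : μ < a) (ha1 : a < 1)
    (hd : 0 < d) (hμB : μB ∈ Ioo μ a) :
    HasDerivAt
      (fun t =>
        μB * ((μ - a) * μB + (a - 1) * μ) ^ 2 *
            ((μ ^ 2 + (t - 1) * μ + (a - 1) * t) * μB - a * μ ^ 2 + (a - a * t) * μ) -
          μ * ((μ + a - 1) * μB - a * μ) ^ 2 *
            ((μ - a) * μB ^ 2 + (t - 1) * (μ - a) * μB + (a - 1) * t * μ))
      ((μB - μ) * ((μ - a) * μB + (a - 1) * μ) * ((μ - a) * μB - a * μ) *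
        ((μ + a - 1) * μB - a * μ)) d ∧
    (μB - μ) * ((μ - a) * μB + (a - 1) * μ) * ((μ - a) * μB - a * μ) *
        ((μ + a - 1) * μB - a * μ) < 0 := by
  obtain ⟨h1, h2⟩ := hμB
  constructor
  · set c1 : ℝ := (μB - μ) * ((μ - a) * μB + (a - 1) * μ) * ((μ - a) * μB - a * μ) *
      ((μ + a - 1) * μB - a * μ) with hc1
    set c0 : ℝ := μB * ((μ - a) * μB + (a - 1) * μ) ^ 2 *
        ((μ ^ 2 + (0 - 1) * μ + (a - 1) * 0) * μB - a * μ ^ 2 + (a - a * 0) * μ) -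
      μ * ((μ + a - 1) * μB - a * μ) ^ 2 *
        ((μ - a) * μB ^ 2 + (0 - 1) * (μ - a) * μB + (a - 1) * 0 * μ) with hc0
    have h : HasDerivAt (fun t : ℝ => c1 * t + c0) c1 d :=
      by simpa using ((hasDerivAt_id d).const_mul c1).add_const c0
    convert h using 2 with t
    rw [hc1, hc0]; ring
  · have A : 0 < μB - μ := by linarith
    have B : (μ - a) * μB + (a - 1) * μ < 0 := by nlinarith
    have C : (μ - a) * μB - a * μ < 0 := by nlinarith
    have D : (μ + a - 1) * μB - a * μ < 0 := by nlinarith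
    have := mul_pos (mul_pos_of_neg_of_neg B C) (neg_pos.mpr D)
    nlinarith
end

section
/- Let φ_LL(x) = x·log(x/(1-x)) + (1-x)·log((1-x)/x) (up to an additive constant), and let φ_LL'(x) denote the derivative of x log(x/(1-x)) + (1-x) log((1-x)/x). Define q_LL(a) := 2(1-a)a·μ(1-μ)·(φ_LL'(a) - φ_LL'(μ))/(a - μ) for fixed μ ∈ (0,1). Then lim_{a→1⁻} q_LL(a) = 2μ. Consequently, 1 - q_LL(a) > 0 for a near 1 if and only if μ < 1/2. -/
open Set Filter Topology

private lemma phiLL_hasDeriv (x : ℝ) (hx : x ∈ Ioo (0:ℝ) 1) :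
    HasDerivAt (fun x => x * Real.log (x / (1 - x)) + (1 - x) * Real.log ((1 - x) / x))
      (2 * Real.log (x / (1 - x)) + (2 * x - 1) / (x * (1 - x))) x := by
  obtain ⟨hx0, hx1⟩ := hx
  have h1 : (0:ℝ) < 1 - x := by linarith
  have hxne : x ≠ 0 := ne_of_gt hx0
  have h1ne : (1:ℝ) - x ≠ 0 := ne_of_gt h1
  have hu : HasDerivAt (fun x : ℝ => x / (1 - x))
      ((1 * (1 - x) - x * (-1)) / ((1 - x) ^ 2)) x :=
    (hasDerivAt_id x).div ((hasDerivAt_id x).const_sub 1) h1ne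
  have hv : HasDerivAt (fun x : ℝ => (1 - x) / x)
      (((-1) * x - (1 - x) * 1) / (x ^ 2)) x :=
    ((hasDerivAt_id x).const_sub 1).div (hasDerivAt_id x) hxne
  have hlog1 := hu.log (div_ne_zero hxne h1ne)
  have hlog2 := hv.log (div_ne_zero h1ne hxne)
  have h := (((hasDerivAt_id x).mul hlog1).add
    (((hasDerivAt_id x).const_sub 1).mul hlog2))
  refine h.congr_deriv ?_
  simp only [id]
  rw [Real.log_div hxne h1ne, Real.log_div h1ne hxne]
  field_simp
  ring

theorem stmt15 (μ : ℝ) (hμ : μ ∈ Ioo (0:ℝ) 1)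
    (φLL : ℝ → ℝ)
    (hφ : φLL = fun x => x * Real.log (x / (1 - x)) + (1 - x) * Real.log ((1 - x) / x))
    (qLL : ℝ → ℝ)
    (hq : qLL = fun a =>
      2 * (1 - a) * a * μ * (1 - μ) * (deriv φLL a - deriv φLL μ) / (a - μ)) :
    Tendsto qLL (nhdsWithin 1 (Iio 1)) (nhds (2 * μ)) ∧
    ((∀ᶠ a in nhdsWithin 1 (Iio 1), 1 - qLL a > 0) ↔ μ < 1 / 2) := by
  obtain ⟨hμ0, hμ1⟩ := hμ
  have hderiv : ∀ x ∈ Ioo (0:ℝ) 1,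
      deriv φLL x = 2 * Real.log (x / (1 - x)) + (2 * x - 1) / (x * (1 - x)) := by
    intro x hx
    rw [hφ]
    exact (phiLL_hasDeriv x hx).deriv
  set C : ℝ := deriv φLL μ with hC
  -- continuous model function
  set G : ℝ → ℝ := fun a => μ * (1 - μ) *
      ((4 * (a * Real.log a) * (1 - a) - 4 * a * ((1 - a) * Real.log (1 - a))
        + 2 * (2 * a - 1)) - 2 * (1 - a) * a * C) / (a - μ) with hG
  have hGcont : ContinuousAt G 1 := by
    apply ContinuousAt.div
    · fun_prop
    · fun_prop
    · simp; linarith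
  have hG1 : G 1 = 2 * μ := by
    have h1μ : (1:ℝ) - μ ≠ 0 := by linarith
    simp only [hG]
    norm_num
    field_simp
  have hmem : Ioo μ 1 ∈ nhdsWithin (1:ℝ) (Iio 1) := by
    apply mem_nhdsWithin.2
    exact ⟨Ioi μ, isOpen_Ioi, hμ1, by intro x ⟨h1, h2⟩; exact ⟨h1, h2⟩⟩
  have heq : ∀ᶠ a in nhdsWithin (1:ℝ) (Iio 1), qLL a = G a := by
    filter_upwards [hmem] with a ha
    obtain ⟨haμ, ha1⟩ := ha
    have ha0 : (0:ℝ) < a := lt_trans hμ0 haμ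
    have h1a : (0:ℝ) < 1 - a := by linarith
    have haμ' : a - μ ≠ 0 := by intro h; nlinarith
    simp only [hq, hG]
    rw [hderiv a ⟨ha0, ha1⟩]
    have hlog : Real.log (a / (1 - a)) = Real.log a - Real.log (1 - a) :=
      Real.log_div (ne_of_gt ha0) (ne_of_gt h1a)
    rw [hlog]
    rw [div_eq_div_iff haμ' haμ']
    field_simp
    ring
  have htend : Tendsto qLL (nhdsWithin 1 (Iio 1)) (nhds (2 * μ)) := by
    have : Tendsto G (nhdsWithin 1 (Iio 1)) (nhds (2 * μ)) := by
      rw [← hG1]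
      exact hGcont.continuousWithinAt.tendsto
    exact this.congr' (heq.mono fun a h => h.symm)
  refine ⟨htend, ?_, ?_⟩
  · -- forward direction
    intro hev
    by_contra hle
    push_neg at hle
    rcases lt_or_eq_of_le hle with hlt | heqμ
    · -- μ > 1/2 : qLL → 2μ > 1
      have : ∀ᶠ a in nhdsWithin (1:ℝ) (Iio 1), qLL a > 1 := by
        have := htend.eventually (eventually_gt_nhds (by linarith : (1:ℝ) < 2 * μ))
        exact this
      have := (hev.and this).exists
      obtain ⟨a, h1, h2⟩ := this
      linarith
    · -- μ = 1/2
      have hμeq : μ = 1 / 2 := heqμ.symm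
      have hCval : C = 0 := by
        rw [hC, hderiv μ ⟨hμ0, hμ1⟩, hμeq]
        norm_num
      have hmem2 : Ioo (1/2 : ℝ) 1 ∈ nhdsWithin (1:ℝ) (Iio 1) := by
        apply mem_nhdsWithin.2
        exact ⟨Ioi (1/2), isOpen_Ioi, by norm_num, by intro x ⟨h1, h2⟩; exact ⟨h1, h2⟩⟩
      have hgt : ∀ᶠ a in nhdsWithin (1:ℝ) (Iio 1), qLL a > 1 := by
        filter_upwards [hmem2] with a ha
        obtain ⟨ha2, ha1⟩ := ha
        have ha0 : (0:ℝ) < a := by linarith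
        have h1a : (0:ℝ) < 1 - a := by linarith
        simp only [hq]
        rw [hderiv a ⟨ha0, ha1⟩, hCval, hμeq]
        have hL : 0 < Real.log (a / (1 - a)) := by
          apply Real.log_pos
          rw [lt_div_iff₀ h1a]; linarith
        rw [gt_iff_lt, lt_div_iff₀ (by linarith : (0:ℝ) < a - 1/2)]
        have key : 2 * (1 - a) * a * (1/2) * (1 - 1/2) *
            (2 * Real.log (a / (1 - a)) + (2 * a - 1) / (a * (1 - a)) - 0)
            = a * (1 - a) * Real.log (a / (1 - a)) + (a - 1/2) := by
          field_simp
          ring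
        rw [key]
        nlinarith [mul_pos (mul_pos ha0 h1a) hL]
      obtain ⟨a, h1, h2⟩ := (hev.and hgt).exists
      linarith
  · -- backward
    intro hlt
    have := htend.eventually (eventually_lt_nhds (by linarith : 2 * μ < 1))
    filter_upwards [this] with a ha
    linarith
end

section
/- Under the setup of the preference-bias first-order condition s(b; v, ρ, η) := φ(b) + ηa + (a - b)φ'(b) - ηρ(1-a) + (1-η)v - φ(a) = 0 with (a-b)φ''(b) > 0: the implicitly defined root b satisfies ∂b/∂v ≤ 0 (since ∂s/∂v = 1-η ≥ 0), ∂b/∂ρ ≥ 0 (since ∂s/∂ρ = -η(1-a) ≤ 0), and ∂b/∂η has the opposite sign of a - ρ(1-a) - v. -/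
open Set Filter Topology

lemma deriv_zero_aux {f : ℝ → ℝ} {d t : ℝ} (hf : HasDerivAt f d t)
    (h0 : ∀ᶠ x in nhds t, f x = 0) : d = 0 := by
  have h : HasDerivAt f 0 t :=
    (hasDerivAt_const t (0:ℝ)).congr_of_eventuallyEq (h0.mono fun x hx => hx)
  exact hf.unique h

theorem stmt17 (φ φ' φ'' : ℝ → ℝ) (v η ρ a b : ℝ)
    (hderiv : ∀ x ∈ Ioo (0:ℝ) 1, HasDerivAt φ (φ' x) x)
    (hderiv2 : ∀ x ∈ Ioo (0:ℝ) 1, HasDerivAt φ' (φ'' x) x)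
    (hv : 0 < v) (hη : η ∈ Icc (0:ℝ) 1) (hρ : 0 ≤ ρ)
    (hb : 0 < b) (hba : b < a) (ha1 : a < 1)
    (hpos : (a - b) * φ'' b > 0)
    (bv : ℝ → ℝ) (bv' : ℝ) (hbv : bv v = b) (hbvd : HasDerivAt bv bv' v)
    (heqv : ∀ᶠ w in nhds v,
      φ (bv w) + η * a + (a - bv w) * φ' (bv w) - η * ρ * (1 - a) +
        (1 - η) * w - φ a = 0)
    (br : ℝ → ℝ) (br' : ℝ) (hbr : br ρ = b) (hbrd : HasDerivAt br br' ρ)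
    (heqr : ∀ᶠ r in nhds ρ,
      φ (br r) + η * a + (a - br r) * φ' (br r) - η * r * (1 - a) +
        (1 - η) * v - φ a = 0)
    (be : ℝ → ℝ) (be' : ℝ) (hbe : be η = b) (hbed : HasDerivAt be be' η)
    (heqe : ∀ᶠ e in nhds η,
      φ (be e) + e * a + (a - be e) * φ' (be e) - e * ρ * (1 - a) +
        (1 - e) * v - φ a = 0) :
    bv' ≤ 0 ∧ 0 ≤ br' ∧ Real.sign be' = -Real.sign (a - ρ * (1 - a) - v) := by
  have hbmem : b ∈ Ioo (0:ℝ) 1 := ⟨hb, by linarith⟩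
  have hφb : HasDerivAt φ (φ' b) b := hderiv b hbmem
  have hφ'b : HasDerivAt φ' (φ'' b) b := hderiv2 b hbmem
  -- v part
  have Ev : (a - b) * φ'' b * bv' + (1 - η) = 0 := by
    have h1 : HasDerivAt (fun w => φ (bv w)) (φ' b * bv') v :=
      HasDerivAt.comp v (hbv ▸ hφb) hbvd
    have h2 : HasDerivAt (fun w => a - bv w) (-bv') v := hbvd.const_sub a
    have h3 : HasDerivAt (fun w => φ' (bv w)) (φ'' b * bv') v :=
      HasDerivAt.comp v (hbv ▸ hφ'b) hbvd
    have h4 := h2.mul h3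
    have h5 : HasDerivAt (fun w : ℝ => (1 - η) * w) ((1 - η) * 1) v :=
      (hasDerivAt_id v).const_mul (1 - η)
    have htot := ((((h1.add_const (η * a)).add h4).sub_const
      (η * ρ * (1 - a))).add h5).sub_const (φ a)
    have hz := deriv_zero_aux htot heqv
    rw [hbv] at hz
    nlinarith [hz]
  have hη0 := hη.1
  have hη1 := hη.2
  have hbv0 : bv' ≤ 0 := by
    by_contra h
    push_neg at h
    nlinarith [mul_pos hpos h]
  -- ρ part
  have Er : (a - b) * φ'' b * br' - η * (1 - a) = 0 := by
    have h1 : HasDerivAt (fun r => φ (br r)) (φ' b * br') ρ :=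
      HasDerivAt.comp ρ (hbr ▸ hφb) hbrd
    have h2 : HasDerivAt (fun r => a - br r) (-br') ρ := hbrd.const_sub a
    have h3 : HasDerivAt (fun r => φ' (br r)) (φ'' b * br') ρ :=
      HasDerivAt.comp ρ (hbr ▸ hφ'b) hbrd
    have h4 := h2.mul h3
    have h5 : HasDerivAt (fun r : ℝ => η * r * (1 - a)) (η * 1 * (1 - a)) ρ :=
      ((hasDerivAt_id ρ).const_mul η).mul_const (1 - a)
    have htot := ((((h1.add_const (η * a)).add h4).sub h5).add_const
      ((1 - η) * v)).sub_const (φ a)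
    have hz := deriv_zero_aux htot heqr
    rw [hbr] at hz
    nlinarith [hz]
  have hbr0 : 0 ≤ br' := by
    by_contra h
    push_neg at h
    have h1a : 0 ≤ η * (1 - a) := mul_nonneg hη0 (by linarith)
    nlinarith [mul_neg_of_pos_of_neg hpos h]
  -- η part
  have Ee : (a - b) * φ'' b * be' + (a - ρ * (1 - a) - v) = 0 := by
    have h1 : HasDerivAt (fun e => φ (be e)) (φ' b * be') η :=
      HasDerivAt.comp η (hbe ▸ hφb) hbed
    have h2 : HasDerivAt (fun e => a - be e) (-be') η := hbed.const_sub a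
    have h3 : HasDerivAt (fun e => φ' (be e)) (φ'' b * be') η :=
      HasDerivAt.comp η (hbe ▸ hφ'b) hbed
    have h4 := h2.mul h3
    have ha' : HasDerivAt (fun e : ℝ => e * a) (1 * a) η :=
      (hasDerivAt_id η).mul_const a
    have hr' : HasDerivAt (fun e : ℝ => e * ρ * (1 - a)) (1 * ρ * (1 - a)) η :=
      ((hasDerivAt_id η).mul_const ρ).mul_const (1 - a)
    have hv' : HasDerivAt (fun e : ℝ => (1 - e) * v) (-1 * v) η :=
      ((hasDerivAt_id η).const_sub 1).mul_const v
    have htot := ((((h1.add ha').add h4).sub hr').add hv').sub_const (φ a)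
    have hz := deriv_zero_aux htot heqe
    rw [hbe] at hz
    nlinarith [hz]
  refine ⟨hbv0, hbr0, ?_⟩
  set K := a - ρ * (1 - a) - v with hK
  rcases lt_trichotomy K 0 with hlt | heq | hgt
  · have hbe' : 0 < be' := by
      by_contra h
      push_neg at h
      nlinarith [mul_nonpos_of_nonneg_of_nonpos hpos.le h]
    rw [Real.sign_of_pos hbe', Real.sign_of_neg hlt]
    ring
  · have hbe' : be' = 0 := by
      have : (a - b) * φ'' b * be' = 0 := by linarith
      exact (mul_eq_zero.mp this).resolve_left (ne_of_gt hpos)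
    rw [hbe', heq, Real.sign_zero]
    ring
  · have hbe' : be' < 0 := by
      by_contra h
      push_neg at h
      nlinarith [mul_nonneg hpos.le h]
    rw [Real.sign_of_neg hbe', Real.sign_of_pos hgt]
end
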